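/- arXiv:2404.04658 — 3 statements merged into one kernel-verified Lean document; each statement's English description precedes it below -/
import Mathlib

section
/- Let γ ≥ 0, let k < m be nonnegative integers, let θ ∈ (0,1) and set s = (1−θ)k + θm. Let (u_{l,n,μ})_{(l,n,μ)∈I} be a family of real numbers with Σ_{(l,n,μ)∈I} (n+1)^k (n+l+1)^k u_{l,n,μ}² h_{l,n}² < ∞. For t > 0 define the modified K-functional K̃(t,u)² := inf over all real families (v_{l,n,μ})_{(l,n,μ)∈I} with Σ_I (n+1)^m (n+l+1)^m v_{l,n,μ}² h_{l,n}² < ∞ of Σ_{(l,n,μ)∈I} [ (n+1)^k (n+l+1)^k (u_{l,n,μ} − v_{l,n,μ})² + t² (n+1)^m (n+l+1)^m v_{l,n,μ}² ] h_{l,n}². Then ∫₀^∞ t^{−1−2θ} K̃(t,u)² dt = C_θ² · Σ_{(l,n,μ)∈I} (n+1)^s (n+l+1)^s u_{l,n,μ}² h_{l,n}², where C_θ² := ∫₀^∞ τ^{1−2θ}/(1+τ²) dτ is finite and positive (both sides of the equality may simultaneously equal +∞). -/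
/-!
The coefficients decouple the K-functional: for each index the minimization over `v_i` is the
scalar problem `min_v a (x - v)² + t² b v²`, attained at `v = a x / (a + t² b)` with value the
parallel sum `a t² b / (a + t² b) · x²`. The substitution `t = √(a / b) τ` turns
`∫₀^∞ t^{-1-2θ} a t² b / (a + t² b) dt` into `a^{1-θ} b^θ C_θ²`, and for
`a = (n+1)^k (n+l+1)^k h²`, `b = (n+1)^m (n+l+1)^m h²` the product `a^{1-θ} b^θ` is the weight
of order `s`. Monotone convergence exchanges the integral and the sum.
-/

open MeasureTheory

noncomputable section

/-- Jacobi polynomial `P_n^{(a,b)}(t)`, extended by `0` for `n < 0`. -/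
def jacobiP (a b : ℝ) (n : ℤ) (t : ℝ) : ℝ :=
  if 0 ≤ n then
    (-1 : ℝ) ^ n.toNat *
      (Real.Gamma ((n.toNat : ℝ) + 1 + b) /
        ((n.toNat.factorial : ℝ) * Real.Gamma ((n.toNat : ℝ) + 1 + a + b))) *
      ∑ j ∈ Finset.range (n.toNat + 1),
        (-1 : ℝ) ^ j * (2 : ℝ) ^ (-(j : ℤ)) * (n.toNat.choose j : ℝ) *
          (Real.Gamma ((n.toNat : ℝ) + (j : ℝ) + 1 + a + b) / Real.Gamma ((j : ℝ) + 1 + b)) *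
          (1 + t) ^ j
  else 0

/-- Solid harmonic `𝒱_{l,μ}` on `ℝ²`: `𝒱_{0,1} = 1/2`, and for `l ≥ 1`,
`𝒱_{l,1} = Re((x+iy)^l) = r^l cos(lφ)`, `𝒱_{l,-1} = Im((x+iy)^l) = r^l sin(lφ)`;
it is `0` for `l < 0` and for `(l,μ) = (0,-1)`. -/
def solidH (l : ℤ) (μ : ℤ) (p : ℝ × ℝ) : ℝ :=
  if l = 0 then (if μ = 1 then 1 / 2 else 0)
  else if 0 < l then
    (if μ = 1 then (((p.1 : ℂ) + (p.2 : ℂ) * Complex.I) ^ l.toNat).re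
     else if μ = -1 then (((p.1 : ℂ) + (p.2 : ℂ) * Complex.I) ^ l.toNat).im
     else 0)
  else 0

/-- The open unit disk in `ℝ²`. -/
def unitDisk : Set (ℝ × ℝ) := {p : ℝ × ℝ | p.1 ^ 2 + p.2 ^ 2 < 1}

/-- Squared weighted `L²` norm `‖f‖_β² = ∫_Ω (1-r²)^β f²`. -/
def wnormSq (β : ℝ) (f : ℝ × ℝ → ℝ) : ℝ :=
  ∫ p in unitDisk, (1 - (p.1 ^ 2 + p.2 ^ 2)) ^ β * f p ^ 2

/-- `h_{l,n} = ‖𝒱_{l,μ} P_n^{(γ,l)}(2r²-1)‖_γ`. -/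
def hln (γ : ℝ) (l n : ℕ) : ℝ :=
  Real.sqrt (wnormSq γ (fun p =>
    solidH (l : ℤ) 1 p * jacobiP γ (l : ℝ) (n : ℤ) (2 * (p.1 ^ 2 + p.2 ^ 2) - 1)))

/-- Index set `I`: triples `(l,n,μ)` with `μ ∈ {1,-1}` (encoded as `Bool`, `true ↦ 1`),
excluding `l = 0, μ = -1`. -/
abbrev IdxI : Type := {x : ℕ × ℕ × Bool // ¬(x.1 = 0 ∧ x.2.2 = false)}

def lIdx (i : IdxI) : ℕ := i.1.1
def nIdx (i : IdxI) : ℕ := i.1.2.1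
def muIdx (i : IdxI) : ℤ := if i.1.2.2 then 1 else -1

def hh (γ : ℝ) (i : IdxI) : ℝ := hln γ (lIdx i) (nIdx i)

/-- The weight `(n+1)^σ (n+l+1)^σ`. -/
def wt (σ : ℝ) (i : IdxI) : ℝ :=
  ((nIdx i : ℝ) + 1) ^ σ * ((nIdx i : ℝ) + (lIdx i : ℝ) + 1) ^ σ

/-- The basis function `𝒱_{l,μ}(x) P_n^{(γ,l)}(2r²-1)`. -/
def basisF (γ : ℝ) (i : IdxI) (p : ℝ × ℝ) : ℝ :=
  solidH (lIdx i : ℤ) (muIdx i) p *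
    jacobiP γ (lIdx i : ℝ) (nIdx i : ℤ) (2 * (p.1 ^ 2 + p.2 ^ 2) - 1)

/-- Partial derivative in `x`. -/
def pdx (f : ℝ × ℝ → ℝ) : ℝ × ℝ → ℝ := fun p => fderiv ℝ f p (1, 0)
/-- Partial derivative in `y`. -/
def pdy (f : ℝ × ℝ → ℝ) : ℝ × ℝ → ℝ := fun p => fderiv ℝ f p (0, 1)

/-- `C_{l,μ}`. -/
def Cc (l : ℕ) : ℝ := if l = 0 then Real.pi / 2 else Real.pi

/-- Objective functional in the modified K-functional. -/
def objVal (γ : ℝ) (k m : ℕ) (t : ℝ) (u v : IdxI → ℝ) : ℝ :=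
  ∑' i : IdxI, (wt (k : ℝ) i * (u i - v i) ^ 2 + t ^ 2 * wt (m : ℝ) i * v i ^ 2) * hh γ i ^ 2

/-- Admissibility: `v ∈ H̃^m_γ`. -/
def admissible (γ : ℝ) (m : ℕ) (v : IdxI → ℝ) : Prop :=
  Summable fun i : IdxI => wt (m : ℝ) i * v i ^ 2 * hh γ i ^ 2

/-- The squared modified K-functional `K̃(t,u)²`. -/
def KtSq (γ : ℝ) (k m : ℕ) (u : IdxI → ℝ) (t : ℝ) : ℝ :=
  sInf {S : ℝ | ∃ v : IdxI → ℝ, admissible γ m v ∧ S = objVal γ k m t u v}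

/-- Pseudo-eigenvalue `λ_{l,n}` of the fractional Laplacian. -/
def lamFL (α : ℝ) (l n : ℕ) : ℝ :=
  (2 : ℝ) ^ α * Real.Gamma ((n : ℝ) + 1 + α / 2) *
      Real.Gamma ((n : ℝ) + (l : ℝ) + 1 + α / 2) /
    (Real.Gamma ((n : ℝ) + 1) * Real.Gamma ((n : ℝ) + (l : ℝ) + 1))

/-- Euclidean norm on `ℝ²` (as `ℝ × ℝ`). -/
def enorm2 (p : ℝ × ℝ) : ℝ := Real.sqrt (p.1 ^ 2 + p.2 ^ 2)

open Set

def parallelSum (A B : ℝ) : ℝ := A * B / (A + B)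

section ParallelSum

variable {A B : ℝ}

theorem parallelSum_nonneg (hA : 0 ≤ A) (hB : 0 ≤ B) : 0 ≤ parallelSum A B := by
  unfold parallelSum; positivity

theorem parallelSum_le_left (hA : 0 ≤ A) (hB : 0 ≤ B) : parallelSum A B ≤ A := by
  rcases (add_nonneg hA hB).eq_or_lt with h | h
  · obtain ⟨rfl, rfl⟩ : A = 0 ∧ B = 0 := ⟨by linarith, by linarith⟩
    simp [parallelSum]
  · rw [parallelSum, div_le_iff₀ h]; nlinarith

theorem parallelSum_mul_sq_le (hA : 0 ≤ A) (hB : 0 ≤ B) (x v : ℝ) :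
    parallelSum A B * x ^ 2 ≤ A * (x - v) ^ 2 + B * v ^ 2 := by
  rcases (add_nonneg hA hB).eq_or_lt with h | h
  · obtain ⟨rfl, rfl⟩ : A = 0 ∧ B = 0 := ⟨by linarith, by linarith⟩
    simp [parallelSum]
  · rw [parallelSum, div_mul_eq_mul_div, div_le_iff₀ h]
    nlinarith [sq_nonneg (A * (x - v) - B * v)]

theorem parallelSum_mul_sq_eq (hA : 0 ≤ A) (hB : 0 ≤ B) (x : ℝ) :
    A * (x - A * x / (A + B)) ^ 2 + B * (A * x / (A + B)) ^ 2 = parallelSum A B * x ^ 2 := by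
  rcases (add_nonneg hA hB).eq_or_lt with h | h
  · obtain ⟨rfl, rfl⟩ : A = 0 ∧ B = 0 := ⟨by linarith, by linarith⟩
    simp [parallelSum]
  · rw [parallelSum]; field_simp; ring

end ParallelSum

section QuadraticMinimization

variable {ι : Type*} {a b u : ι → ℝ}

theorem isLeast_tsum_quadratic (ha : 0 ≤ a) (hab : a ≤ b)
    (hu : Summable fun i => a i * u i ^ 2) {t : ℝ} (ht : t ≠ 0) :
    IsLeast {S | ∃ v : ι → ℝ, Summable (fun i => b i * v i ^ 2) ∧
        S = ∑' i, (a i * (u i - v i) ^ 2 + t ^ 2 * b i * v i ^ 2)}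
      (∑' i, parallelSum (a i) (t ^ 2 * b i) * u i ^ 2) := by
  have hb : 0 ≤ b := ha.trans hab
  have htb : ∀ i, 0 ≤ t ^ 2 * b i := fun i => mul_nonneg (sq_nonneg t) (hb i)
  have hquad_nonneg : ∀ (v : ι → ℝ) i, 0 ≤ a i * (u i - v i) ^ 2 + t ^ 2 * b i * v i ^ 2 :=
    fun v i => add_nonneg (mul_nonneg (ha i) (sq_nonneg _)) (mul_nonneg (htb i) (sq_nonneg _))
  have hsummable_quad : ∀ v : ι → ℝ, Summable (fun i => b i * v i ^ 2) →
      Summable fun i => a i * (u i - v i) ^ 2 + t ^ 2 * b i * v i ^ 2 := by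
    intro v hv
    refine Summable.of_nonneg_of_le (hquad_nonneg v) (fun i => ?_)
      ((hu.mul_left 2).add (hv.mul_left (2 + t ^ 2)))
    nlinarith [mul_le_mul_of_nonneg_right (hab i) (sq_nonneg (v i)),
      mul_nonneg (ha i) (sq_nonneg (u i + v i)), mul_nonneg (htb i) (sq_nonneg (v i))]
  refine ⟨⟨fun i => a i * u i / (a i + t ^ 2 * b i), ?_, ?_⟩, ?_⟩
  · -- admissible because `t² b v² ≤ a u²` for the optimal `v`
    refine Summable.of_nonneg_of_le (fun i => mul_nonneg (hb i) (sq_nonneg _)) (fun i => ?_)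
      (hu.mul_left (t ^ 2)⁻¹)
    rw [le_inv_mul_iff₀ (by positivity), ← mul_assoc]
    calc t ^ 2 * b i * (a i * u i / (a i + t ^ 2 * b i)) ^ 2
        ≤ parallelSum (a i) (t ^ 2 * b i) * u i ^ 2 := by
          rw [← parallelSum_mul_sq_eq (ha i) (htb i)]
          exact le_add_of_nonneg_left (mul_nonneg (ha i) (sq_nonneg _))
      _ ≤ a i * u i ^ 2 := by
          gcongr; exact parallelSum_le_left (ha i) (htb i)
  · exact tsum_congr fun i => (parallelSum_mul_sq_eq (ha i) (htb i) (u i)).symm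
  · rintro S ⟨v, hv, rfl⟩
    refine Summable.tsum_le_tsum (fun i => parallelSum_mul_sq_le (ha i) (htb i) (u i) (v i))
      ?_ (hsummable_quad v hv)
    exact Summable.of_nonneg_of_le
      (fun i => mul_nonneg (parallelSum_nonneg (ha i) (htb i)) (sq_nonneg _))
      (fun i => mul_le_mul_of_nonneg_right (parallelSum_le_left (ha i) (htb i)) (sq_nonneg _)) hu

end QuadraticMinimization

section Weights

theorem wt_eq_rpow (σ : ℝ) (i : IdxI) :
    wt σ i = (((nIdx i : ℝ) + 1) * ((nIdx i : ℝ) + lIdx i + 1)) ^ σ :=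
  (Real.mul_rpow (by positivity) (by positivity)).symm

theorem one_le_wt_base (i : IdxI) : 1 ≤ ((nIdx i : ℝ) + 1) * ((nIdx i : ℝ) + lIdx i + 1) := by
  have hn : (0 : ℝ) ≤ nIdx i := Nat.cast_nonneg _
  have hl : (0 : ℝ) ≤ lIdx i := Nat.cast_nonneg _
  nlinarith

theorem wt_pos (σ : ℝ) (i : IdxI) : 0 < wt σ i := by
  rw [wt_eq_rpow]; exact Real.rpow_pos_of_pos (zero_lt_one.trans_le (one_le_wt_base i)) σ

theorem wt_mono {σ τ : ℝ} (h : σ ≤ τ) (i : IdxI) : wt σ i ≤ wt τ i := by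
  simp only [wt_eq_rpow]; exact Real.rpow_le_rpow_of_exponent_le (one_le_wt_base i) h

theorem wt_mul_rpow_mul_wt_mul_rpow (σ τ θ : ℝ) (i : IdxI) {x : ℝ} (hx : 0 ≤ x) :
    (wt σ i * x) ^ (1 - θ) * (wt τ i * x) ^ θ = wt ((1 - θ) * σ + θ * τ) i * x := by
  have hbase := zero_lt_one.trans_le (one_le_wt_base i)
  have hx_interp : x ^ (1 - θ) * x ^ θ = x := by
    rw [← Real.rpow_add' hx (by norm_num), sub_add_cancel, Real.rpow_one]
  rw [Real.mul_rpow (wt_pos σ i).le hx, Real.mul_rpow (wt_pos τ i).le hx,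
    mul_mul_mul_comm, hx_interp]
  simp only [wt_eq_rpow, ← Real.rpow_mul hbase.le, ← Real.rpow_add hbase]
  ring_nf

end Weights

theorem KtSq_eq_tsum_parallelSum {γ : ℝ} {k m : ℕ} {u : IdxI → ℝ} (hkm : k ≤ m)
    (hu : Summable fun i => wt (k : ℝ) i * u i ^ 2 * hh γ i ^ 2) {t : ℝ} (ht : t ≠ 0) :
    KtSq γ k m u t =
      ∑' i, parallelSum (wt k i * hh γ i ^ 2) (t ^ 2 * (wt m i * hh γ i ^ 2)) * u i ^ 2 := by
  have hleast := isLeast_tsum_quadratic (a := fun i => wt k i * hh γ i ^ 2)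
    (b := fun i => wt m i * hh γ i ^ 2) (u := u)
    (fun i => mul_nonneg (wt_pos _ i).le (sq_nonneg _))
    (fun i => mul_le_mul_of_nonneg_right (wt_mono (Nat.cast_le.2 hkm) i) (sq_nonneg _))
    (hu.congr fun i => by ring) ht
  rw [← hleast.csInf_eq, KtSq]
  congr 1; ext S
  refine exists_congr fun v => and_congr (iff_of_eq ?_) (iff_of_eq ?_)
  · unfold admissible; congr 1; ext i; ring
  · unfold objVal; congr 2; ext i; ring

section InterpolationConstant

variable {θ : ℝ}

def interpKernel (θ τ : ℝ) : ℝ := τ ^ (1 - 2 * θ) / (1 + τ ^ 2)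

/-- The constant `C_θ²`. -/
def interpConst (θ : ℝ) : ℝ := ∫ τ in Ioi (0 : ℝ), interpKernel θ τ

theorem interpKernel_pos {τ : ℝ} (hτ : 0 < τ) : 0 < interpKernel θ τ :=
  div_pos (Real.rpow_pos_of_pos hτ _) (by positivity)

theorem measurable_interpKernel : Measurable (interpKernel θ) := by
  unfold interpKernel; fun_prop

theorem integrableOn_interpKernel (hθ : θ ∈ Ioo 0 1) :
    IntegrableOn (interpKernel θ) (Ioi 0) := by
  obtain ⟨hθ0, hθ1⟩ := hθ
  have hmeas := measurable_interpKernel (θ := θ)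
  rw [← Ioc_union_Ioi_eq_Ioi zero_le_one]
  refine IntegrableOn.union ?_ ?_
  · -- near `0` the kernel is dominated by `τ ^ (1 - 2θ)`, which is integrable as `1 - 2θ > -1`
    have hdom : IntegrableOn (fun τ : ℝ => τ ^ (1 - 2 * θ)) (Ioc 0 1) := by
      rw [integrableOn_Ioc_iff_integrableOn_Ioo]
      exact (intervalIntegral.integrableOn_Ioo_rpow_iff zero_lt_one).2 (by linarith)
    refine hdom.mono' hmeas.aestronglyMeasurable (ae_restrict_of_forall_mem measurableSet_Ioc ?_)
    intro τ hτ
    rw [Real.norm_of_nonneg (interpKernel_pos hτ.1).le]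
    exact div_le_self (Real.rpow_nonneg hτ.1.le _) (by nlinarith)
  · -- near `∞` it is dominated by `τ ^ (-1 - 2θ)`, integrable as `-1 - 2θ < -1`
    refine (integrableOn_Ioi_rpow_of_lt (by linarith : -1 - 2 * θ < -1) zero_lt_one).mono'
      hmeas.aestronglyMeasurable (ae_restrict_of_forall_mem measurableSet_Ioi ?_)
    intro τ (hτ : 1 < τ)
    have hτ0 : 0 < τ := zero_lt_one.trans hτ
    rw [Real.norm_of_nonneg (interpKernel_pos hτ0).le, interpKernel,
      show -1 - 2 * θ = (1 - 2 * θ) - 2 by ring, Real.rpow_sub hτ0 (1 - 2 * θ) 2, Real.rpow_two]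
    exact div_le_div_of_nonneg_left (Real.rpow_nonneg hτ0.le _) (by positivity) (by linarith)

theorem interpConst_pos (hθ : θ ∈ Ioo 0 1) : 0 < interpConst θ := by
  rw [interpConst, setIntegral_pos_iff_support_of_nonneg_ae
    (ae_restrict_of_forall_mem measurableSet_Ioi fun τ hτ => (interpKernel_pos hτ).le)
    (integrableOn_interpKernel hθ)]
  have : Ioi (0 : ℝ) ⊆ Function.support (interpKernel θ) ∩ Ioi 0 :=
    fun τ hτ => ⟨(interpKernel_pos hτ).ne', hτ⟩
  exact (measure_mono this).trans_lt' (by simp)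

end InterpolationConstant

section KFunctionalIntegral

variable {θ : ℝ}

theorem rpow_mul_parallelSum_eq {A B : ℝ} (hA : 0 < A) (hB : 0 < B) {t : ℝ} (ht : 0 < t) :
    t ^ (-1 - 2 * θ) * parallelSum A (t ^ 2 * B) =
      B * √(B / A) ^ (2 * θ - 1) * interpKernel θ (√(B / A) * t) := by
  have hc : 0 < √(B / A) := Real.sqrt_pos.2 (div_pos hB hA)
  have hc_sq : √(B / A) ^ 2 = B / A := Real.sq_sqrt (div_pos hB hA).le
  have ht_pow : t ^ (-1 - 2 * θ) = t ^ (1 - 2 * θ) / t ^ 2 := by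
    rw [show -1 - 2 * θ = (1 - 2 * θ) - 2 by ring, Real.rpow_sub ht, Real.rpow_two]
  have hc_pow : √(B / A) ^ (2 * θ - 1) = (√(B / A) ^ (1 - 2 * θ))⁻¹ := by
    rw [← Real.rpow_neg hc.le, neg_sub]
  have hc_pos := Real.rpow_pos_of_pos hc (1 - 2 * θ)
  rw [interpKernel, Real.mul_rpow hc.le ht.le, mul_pow, hc_sq, ht_pow, hc_pow, parallelSum]
  field_simp

theorem lintegral_rpow_mul_parallelSum (hθ : θ ∈ Ioo 0 1) {A B : ℝ} (hA : 0 ≤ A)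
    (hB : 0 ≤ B) :
    ∫⁻ t in Ioi 0, ENNReal.ofReal (t ^ (-1 - 2 * θ) * parallelSum A (t ^ 2 * B)) =
      ENNReal.ofReal (interpConst θ) * ENNReal.ofReal (A ^ (1 - θ) * B ^ θ) := by
  rcases hA.eq_or_lt with rfl | hA
  · simp [parallelSum, Real.zero_rpow (by linarith [hθ.2] : 1 - θ ≠ 0)]
  rcases hB.eq_or_lt with rfl | hB
  · simp [parallelSum, Real.zero_rpow hθ.1.ne']
  set c := √(B / A)
  have hc : 0 < c := Real.sqrt_pos.2 (div_pos hB hA)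
  have hint : IntegrableOn (fun t => B * c ^ (2 * θ - 1) * interpKernel θ (c * t)) (Ioi 0) := by
    refine Integrable.const_mul ?_ _
    exact (integrableOn_Ioi_comp_mul_left_iff (interpKernel θ) 0 hc).2
      (by simpa using integrableOn_interpKernel hθ)
  have hconst : B * c ^ (2 * θ - 1) * c⁻¹ = A ^ (1 - θ) * B ^ θ := by
    rw [mul_assoc, ← Real.rpow_neg_one, ← Real.rpow_add hc,
      show 2 * θ - 1 + -1 = 2 * (θ - 1) by ring, Real.rpow_mul hc.le, Real.rpow_two,
      Real.sq_sqrt (div_pos hB hA).le,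
      Real.div_rpow hB.le hA.le, Real.rpow_sub_one hB.ne', Real.rpow_sub_one hA.ne',
      Real.rpow_sub hA, Real.rpow_one]
    field_simp
  rw [setLIntegral_congr_fun measurableSet_Ioi fun t ht => by
      rw [rpow_mul_parallelSum_eq hA hB ht],
    ← ofReal_integral_eq_lintegral_ofReal hint, integral_const_mul,
    integral_comp_mul_left_Ioi _ _ hc, mul_zero, smul_eq_mul, ← interpConst,
    ← ENNReal.ofReal_mul (interpConst_pos hθ).le, ← hconst]
  · congr 1; ring
  · refine ae_restrict_of_forall_mem measurableSet_Ioi fun t ht => ?_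
    exact mul_nonneg (by positivity) (interpKernel_pos (mul_pos hc ht)).le

theorem lintegral_tsum_parallelSum {ι : Type*} [Countable ι] (hθ : θ ∈ Ioo 0 1)
    {a b u : ι → ℝ} (ha : 0 ≤ a) (hb : 0 ≤ b) (hu : Summable fun i => a i * u i ^ 2) :
    ∫⁻ t in Ioi 0, ENNReal.ofReal (t ^ (-1 - 2 * θ) *
        ∑' i, parallelSum (a i) (t ^ 2 * b i) * u i ^ 2) =
      ENNReal.ofReal (interpConst θ) *
        ∑' i, ENNReal.ofReal (a i ^ (1 - θ) * b i ^ θ * u i ^ 2) := by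
  have htb : ∀ t i, 0 ≤ t ^ 2 * b i := fun t i => mul_nonneg (sq_nonneg t) (hb i)
  have hterm_nonneg : ∀ t i, 0 ≤ parallelSum (a i) (t ^ 2 * b i) * u i ^ 2 :=
    fun t i => mul_nonneg (parallelSum_nonneg (ha i) (htb t i)) (sq_nonneg _)
  have hsum : ∀ t, Summable fun i => parallelSum (a i) (t ^ 2 * b i) * u i ^ 2 := fun t =>
    Summable.of_nonneg_of_le (hterm_nonneg t)
      (fun i => mul_le_mul_of_nonneg_right (parallelSum_le_left (ha i) (htb t i)) (sq_nonneg _)) hu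
  calc _ = ∫⁻ t in Ioi 0, ∑' i, ENNReal.ofReal (t ^ (-1 - 2 * θ) *
          parallelSum (a i) (t ^ 2 * b i)) * ENNReal.ofReal (u i ^ 2) := by
        refine setLIntegral_congr_fun measurableSet_Ioi fun t ht => ?_
        have hpow := Real.rpow_nonneg (le_of_lt ht) (-1 - 2 * θ)
        rw [← tsum_mul_left, ENNReal.ofReal_tsum_of_nonneg
          (fun i => mul_nonneg hpow (hterm_nonneg t i)) ((hsum t).mul_left _)]
        exact tsum_congr fun i => by rw [← mul_assoc, ENNReal.ofReal_mul' (sq_nonneg _)]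
    _ = ∑' i, ∫⁻ t in Ioi 0, ENNReal.ofReal (t ^ (-1 - 2 * θ) *
          parallelSum (a i) (t ^ 2 * b i)) * ENNReal.ofReal (u i ^ 2) :=
        lintegral_tsum fun i => by unfold parallelSum; fun_prop
    _ = _ := by
        rw [← ENNReal.tsum_mul_left]
        refine tsum_congr fun i => ?_
        rw [lintegral_mul_const' _ _ ENNReal.ofReal_ne_top,
          lintegral_rpow_mul_parallelSum hθ (ha i) (hb i), mul_assoc,
          ← ENNReal.ofReal_mul' (sq_nonneg _)]

end KFunctionalIntegral

theorem stmt0_general (γ : ℝ) (k m : ℕ) (hkm : k < m)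
    (θ : ℝ) (hθ : θ ∈ Set.Ioo (0 : ℝ) 1) (s : ℝ) (hs : s = (1 - θ) * k + θ * m)
    (u : IdxI → ℝ) (hu : Summable fun i : IdxI => wt (k : ℝ) i * u i ^ 2 * hh γ i ^ 2) :
    MeasureTheory.IntegrableOn (fun τ : ℝ => τ ^ (1 - 2 * θ) / (1 + τ ^ 2)) (Set.Ioi 0) ∧
    0 < (∫ τ in Set.Ioi (0 : ℝ), τ ^ (1 - 2 * θ) / (1 + τ ^ 2)) ∧
    (∫⁻ t in Set.Ioi (0 : ℝ), ENNReal.ofReal (t ^ (-1 - 2 * θ) * KtSq γ k m u t)) =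
      ENNReal.ofReal (∫ τ in Set.Ioi (0 : ℝ), τ ^ (1 - 2 * θ) / (1 + τ ^ 2)) *
        ∑' i : IdxI, ENNReal.ofReal (wt s i * u i ^ 2 * hh γ i ^ 2) := by
  refine ⟨integrableOn_interpKernel hθ, interpConst_pos hθ, ?_⟩
  rw [setLIntegral_congr_fun measurableSet_Ioi fun t (ht : 0 < t) => by
      rw [KtSq_eq_tsum_parallelSum hkm.le hu ht.ne'],
    lintegral_tsum_parallelSum hθ (fun i => mul_nonneg (wt_pos _ i).le (sq_nonneg _))
      (fun i => mul_nonneg (wt_pos _ i).le (sq_nonneg _)) (hu.congr fun i => by ring)]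
  congr 1
  refine tsum_congr fun i => ?_
  rw [wt_mul_rpow_mul_wt_mul_rpow _ _ _ i (sq_nonneg _), ← hs]
  congr 1; ring

/-- the modified K-functional norm identity giving that `H̃^s_γ` is an
interpolation space: `∫₀^∞ t^{-1-2θ} K̃(t,u)² dt = C_θ² Σ (n+1)^s (n+l+1)^s u² h²`,
with `C_θ² = ∫₀^∞ τ^{1-2θ}/(1+τ²) dτ` finite and positive. -/
theorem stmt0 (γ : ℝ) (hγ : 0 ≤ γ) (k m : ℕ) (hkm : k < m)
    (θ : ℝ) (hθ : θ ∈ Set.Ioo (0 : ℝ) 1) (s : ℝ) (hs : s = (1 - θ) * k + θ * m)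
    (u : IdxI → ℝ) (hu : Summable fun i : IdxI => wt (k : ℝ) i * u i ^ 2 * hh γ i ^ 2) :
    MeasureTheory.IntegrableOn (fun τ : ℝ => τ ^ (1 - 2 * θ) / (1 + τ ^ 2)) (Set.Ioi 0) ∧
    0 < (∫ τ in Set.Ioi (0 : ℝ), τ ^ (1 - 2 * θ) / (1 + τ ^ 2)) ∧
    (∫⁻ t in Set.Ioi (0 : ℝ), ENNReal.ofReal (t ^ (-1 - 2 * θ) * KtSq γ k m u t)) =
      ENNReal.ofReal (∫ τ in Set.Ioi (0 : ℝ), τ ^ (1 - 2 * θ) / (1 + τ ^ 2)) *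
        ∑' i : IdxI, ENNReal.ofReal (wt s i * u i ^ 2 * hh γ i ^ 2) :=
  stmt0_general γ k m hkm θ hθ s hs u hu
end
end

section
/- Let α > 0, set γ = α/2, and for integers l,n ≥ 0 set λ_{l,n} := 2^α Γ(n+1+α/2) Γ(n+l+1+α/2) / (Γ(n+1) Γ(n+l+1)). For every s ∈ ℝ there exist constants 0 < C₀ ≤ C₁, depending only on α, such that for every family of real numbers (a_{l,n,μ})_{(l,n,μ)∈I}: C₀ · Σ_{(l,n,μ)∈I} (n+1)^s (n+l+1)^s a_{l,n,μ}² h_{l,n}² ≤ Σ_{(l,n,μ)∈I} (n+1)^{s−α} (n+l+1)^{s−α} λ_{l,n}² a_{l,n,μ}² h_{l,n}² ≤ C₁ · Σ_{(l,n,μ)∈I} (n+1)^s (n+l+1)^s a_{l,n,μ}² h_{l,n}² (all sums taken in [0,∞]). Consequently the map sending the coefficient family (a_{l,n,μ}) of ũ = (1−r²)^{α/2} Σ a 𝒱 P to the coefficient family (λ_{l,n} a_{l,n,μ}) of (−Δ)^{α/2} ũ is bounded from the coefficient space with weight (n+1)^s(n+l+1)^s onto the coefficient space with weight (n+1)^{s−α}(n+l+1)^{s−α},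 with bounded inverse. -/
open MeasureTheory

noncomputable section

/-!
Write `R(x) = Γ(x + γ) / Γ(x)` with `γ = α/2`, so that `λ_{l,n} = 2^α R(n+1) R(n+l+1)`.
Log-convexity of `Γ`, together with the crude bounds `y^N Γ(y) ≤ Γ(y+N) ≤ (y+N)^N Γ(y)` coming
from the functional equation, gives `R(x) ≍ x^γ` uniformly for `x ≥ 1`. Hence
`(n+1)^{s-α} (n+l+1)^{s-α} λ_{l,n}² ≍ (n+1)^s (n+l+1)^s` with constants depending only on `α`,
and the two weighted sums are compared term by term.
-/

namespace Real

theorem Gamma_convexComb_le_rpow_mul_rpow {a b t : ℝ} (ha : 0 < a) (hb : 0 < b) (ht0 : 0 ≤ t)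
    (ht1 : t ≤ 1) :
    Gamma ((1 - t) * a + t * b) ≤ Gamma a ^ (1 - t) * Gamma b ^ t := by
  have hlog := convexOn_log_Gamma.2 (Set.mem_Ioi.2 ha) (Set.mem_Ioi.2 hb) (sub_nonneg.2 ht1) ht0
    (by ring)
  simp only [smul_eq_mul, Function.comp_apply] at hlog
  have hpos : 0 < (1 - t) * a + t * b :=
    convex_Ioi (0 : ℝ) ha hb (sub_nonneg.2 ht1) ht0 (by ring)
  rw [rpow_def_of_pos (Gamma_pos_of_pos ha), rpow_def_of_pos (Gamma_pos_of_pos hb), ← exp_add,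
    ← exp_log (Gamma_pos_of_pos hpos)]
  exact exp_le_exp.2 (by linarith)

theorem Gamma_mul_pow_le_Gamma_add_nat {y : ℝ} (hy : 0 < y) (N : ℕ) :
    Gamma y * y ^ N ≤ Gamma (y + N) := by
  induction N with
  | zero => simp
  | succ N ih =>
    rw [Nat.cast_succ, ← add_assoc, Gamma_add_one (by positivity), pow_succ, ← mul_assoc,
      mul_comm (y + N)]
    gcongr
    linarith [N.cast_nonneg (α := ℝ)]

theorem Gamma_add_nat_le {y : ℝ} (hy : 0 < y) (N : ℕ) :
    Gamma (y + N) ≤ Gamma y * (y + N) ^ N := by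
  induction N with
  | zero => simp
  | succ N ih =>
    rw [Nat.cast_succ, ← add_assoc, Gamma_add_one (by positivity)]
    calc (y + N) * Gamma (y + N) ≤ (y + N) * (Gamma y * (y + N) ^ N) := by gcongr
      _ = Gamma y * (y + N) ^ (N + 1) := by ring
      _ ≤ Gamma y * (y + N + 1) ^ (N + 1) := by gcongr Gamma y * ?_ ^ _; linarith

/-- Interpolating `Γ` between `y` and `y + N` by log-convexity. -/
theorem Gamma_add_le_mul_rpow {y δ : ℝ} {N : ℕ} (hy : 0 < y) (hδ : 0 ≤ δ) (hδN : δ ≤ N) :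
    Gamma (y + δ) ≤ Gamma y * (y + N) ^ δ := by
  rcases N.eq_zero_or_pos with rfl | hN
  · obtain rfl : δ = 0 := le_antisymm (by simpa using hδN) hδ
    simp
  have hN' : (0 : ℝ) < N := by exact_mod_cast hN
  set t := δ / N with ht
  have hδt : δ = N * t := by rw [ht, mul_div_cancel₀ _ hN'.ne']
  calc Gamma (y + δ) = Gamma ((1 - t) * y + t * (y + N)) := by rw [hδt]; ring_nf
    _ ≤ Gamma y ^ (1 - t) * Gamma (y + N) ^ t :=
        Gamma_convexComb_le_rpow_mul_rpow hy (by positivity) (by positivity)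
          (div_le_one_of_le₀ hδN hN'.le)
    _ ≤ Gamma y ^ (1 - t) * (Gamma y * (y + N) ^ N) ^ t := by
        gcongr; exact Gamma_add_nat_le hy N
    _ = Gamma y * (y + N) ^ δ := by
        rw [mul_rpow (Gamma_pos_of_pos hy).le (by positivity), ← mul_assoc,
          ← rpow_add (Gamma_pos_of_pos hy), ← rpow_natCast, ← rpow_mul (by positivity), hδt]
        simp

theorem exists_Gamma_add_div_Gamma_bounds {γ : ℝ} (hγ : 0 ≤ γ) :
    ∃ c C : ℝ, 0 < c ∧ 0 < C ∧ ∀ x : ℝ, 1 ≤ x →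
      c * x ^ γ ≤ Gamma (x + γ) / Gamma x ∧ Gamma (x + γ) / Gamma x ≤ C * x ^ γ := by
  obtain ⟨N, hN⟩ := exists_nat_ge γ
  refine ⟨(1 + γ + N) ^ (γ - N), (1 + N) ^ γ, by positivity, by positivity, fun x hx => ?_⟩
  have hx0 : 0 < x := by linarith
  have hxγN : 0 < x + γ + N := by positivity
  rw [le_div_iff₀ (Gamma_pos_of_pos hx0), div_le_iff₀ (Gamma_pos_of_pos hx0)]
  constructor
  · have hstep : Gamma (x + N) ≤ Gamma (x + γ) * (x + γ + N) ^ ((N : ℝ) - γ) := by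
      simpa using Gamma_add_le_mul_rpow (y := x + γ) (N := N) (by positivity) (sub_nonneg.2 hN)
        (by linarith)
    have hpow : x ^ γ = x ^ N * x ^ (γ - N) := by
      rw [← rpow_natCast, ← rpow_add hx0]; ring_nf
    calc (1 + γ + N) ^ (γ - N) * x ^ γ * Gamma x
        = Gamma x * x ^ N * ((1 + γ + N) * x) ^ (γ - N) := by
          rw [hpow, mul_rpow (by positivity) hx0.le]; ring
      _ ≤ Gamma (x + N) * (x + γ + N) ^ (γ - N) :=
          mul_le_mul (Gamma_mul_pow_le_Gamma_add_nat hx0 N)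
            (rpow_le_rpow_of_nonpos hxγN (by nlinarith) (by linarith)) (by positivity)
            (Gamma_pos_of_pos (by positivity)).le
      _ ≤ Gamma (x + γ) * (x + γ + N) ^ ((N : ℝ) - γ) * (x + γ + N) ^ (γ - N) := by gcongr
      _ = Gamma (x + γ) := by rw [mul_assoc, ← rpow_add hxγN]; simp
  · calc Gamma (x + γ) ≤ Gamma x * (x + N) ^ γ := Gamma_add_le_mul_rpow hx0 hγ hN
      _ ≤ Gamma x * ((1 + N) * x) ^ γ := by gcongr; nlinarith
      _ = (1 + N) ^ γ * x ^ γ * Gamma x := by rw [mul_rpow (by positivity) hx0.le]; ring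

theorem rpow_sub_two_mul_sq_bounds {x s γ c C R : ℝ} (hx : 0 < x) (hc : 0 ≤ c)
    (hlo : c * x ^ γ ≤ R) (hhi : R ≤ C * x ^ γ) :
    c ^ 2 * x ^ s ≤ x ^ (s - 2 * γ) * R ^ 2 ∧ x ^ (s - 2 * γ) * R ^ 2 ≤ C ^ 2 * x ^ s := by
  have hscale (d : ℝ) : x ^ (s - 2 * γ) * (d * x ^ γ) ^ 2 = d ^ 2 * x ^ s := by
    rw [mul_pow, ← rpow_mul_natCast hx.le, mul_left_comm, ← rpow_add hx]
    ring_nf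
  have hR : 0 ≤ R := (by positivity : 0 ≤ c * x ^ γ).trans hlo
  constructor
  · rw [← hscale]; gcongr
  · rw [← hscale]; gcongr

end Real

open Real in
theorem lamFL_eq (α : ℝ) (l n : ℕ) :
    lamFL α l n = 2 ^ α * (Gamma ((n : ℝ) + 1 + α / 2) / Gamma ((n : ℝ) + 1)) *
      (Gamma ((n : ℝ) + l + 1 + α / 2) / Gamma ((n : ℝ) + l + 1)) := by
  unfold lamFL; ring

theorem exists_wt_mul_lamFL_sq_bounds {α : ℝ} (hα : 0 ≤ α) :
    ∃ c C : ℝ, 0 < c ∧ c ≤ C ∧ ∀ (s : ℝ) (i : IdxI),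
      c * wt s i ≤ wt (s - α) i * lamFL α (lIdx i) (nIdx i) ^ 2 ∧
      wt (s - α) i * lamFL α (lIdx i) (nIdx i) ^ 2 ≤ C * wt s i := by
  obtain ⟨c, C, hc, hC, hR⟩ := Real.exists_Gamma_add_div_Gamma_bounds (by positivity : 0 ≤ α / 2)
  have hcC : c ≤ C := by simpa using (hR 1 le_rfl).1.trans (hR 1 le_rfl).2
  refine ⟨(2 ^ α) ^ 2 * c ^ 2 * c ^ 2, (2 ^ α) ^ 2 * C ^ 2 * C ^ 2, by positivity,
    by gcongr, fun s i => ?_⟩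
  have hx₁ : (1 : ℝ) ≤ nIdx i + 1 := by simp
  have hx₂ : (1 : ℝ) ≤ nIdx i + lIdx i + 1 := by simp; positivity
  obtain ⟨h₁, h₁'⟩ :=
    Real.rpow_sub_two_mul_sq_bounds (s := s) (by linarith) hc.le (hR _ hx₁).1 (hR _ hx₁).2
  obtain ⟨h₂, h₂'⟩ :=
    Real.rpow_sub_two_mul_sq_bounds (s := s) (by linarith) hc.le (hR _ hx₂).1 (hR _ hx₂).2
  set A₁ := ((nIdx i : ℝ) + 1) ^ (s - 2 * (α / 2)) *
    (Real.Gamma ((nIdx i : ℝ) + 1 + α / 2) / Real.Gamma ((nIdx i : ℝ) + 1)) ^ 2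
  set A₂ := ((nIdx i : ℝ) + lIdx i + 1) ^ (s - 2 * (α / 2)) *
    (Real.Gamma ((nIdx i : ℝ) + lIdx i + 1 + α / 2) / Real.Gamma ((nIdx i : ℝ) + lIdx i + 1)) ^ 2
  have hsplit : wt (s - α) i * lamFL α (lIdx i) (nIdx i) ^ 2 = (2 ^ α) ^ 2 * A₁ * A₂ := by
    rw [wt, lamFL_eq, show s - α = s - 2 * (α / 2) by ring]; ring
  rw [hsplit]
  constructor
  · calc _ = (2 ^ α) ^ 2 * (c ^ 2 * ((nIdx i : ℝ) + 1) ^ s) *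
          (c ^ 2 * ((nIdx i : ℝ) + lIdx i + 1) ^ s) := by rw [wt]; ring
      _ ≤ (2 ^ α) ^ 2 * A₁ * A₂ := by gcongr
  · calc (2 ^ α) ^ 2 * A₁ * A₂ ≤ (2 ^ α) ^ 2 * (C ^ 2 * ((nIdx i : ℝ) + 1) ^ s) *
          (C ^ 2 * ((nIdx i : ℝ) + lIdx i + 1) ^ s) := by gcongr
      _ = _ := by rw [wt]; ring

namespace ENNReal

theorem ofReal_mul_tsum_ofReal_le {ι : Type*} {f g : ι → ℝ} {c : ℝ} (hc : 0 ≤ c)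
    (h : ∀ i, c * f i ≤ g i) :
    ENNReal.ofReal c * ∑' i, ENNReal.ofReal (f i) ≤ ∑' i, ENNReal.ofReal (g i) := by
  rw [← ENNReal.tsum_mul_left]
  exact ENNReal.tsum_le_tsum fun i => (ofReal_mul hc).symm.trans_le (ofReal_le_ofReal (h i))

theorem tsum_ofReal_le_ofReal_mul_tsum {ι : Type*} {f g : ι → ℝ} {C : ℝ} (hC : 0 ≤ C)
    (h : ∀ i, g i ≤ C * f i) :
    ∑' i, ENNReal.ofReal (g i) ≤ ENNReal.ofReal C * ∑' i, ENNReal.ofReal (f i) := by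
  rw [← ENNReal.tsum_mul_left]
  exact ENNReal.tsum_le_tsum fun i => (ofReal_le_ofReal (h i)).trans_eq (ofReal_mul hC)

end ENNReal

/-- the coefficient map `a ↦ λ a` of `(−Δ)^{α/2}` is bounded with bounded
inverse between the weighted coefficient spaces: for all `s` and all families `a`,
`Σ (n+1)^{s-α}(n+l+1)^{s-α} λ² a² h² ∼ Σ (n+1)^s (n+l+1)^s a² h²` in `[0,∞]`, with
constants depending only on `α`. -/
theorem stmt9 (α : ℝ) (hα : 0 < α) :
    ∃ C₀ C₁ : ℝ, 0 < C₀ ∧ C₀ ≤ C₁ ∧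
      ∀ s : ℝ, ∀ a : IdxI → ℝ,
        ENNReal.ofReal C₀ *
            (∑' i : IdxI, ENNReal.ofReal (wt s i * a i ^ 2 * hh (α / 2) i ^ 2)) ≤
          (∑' i : IdxI, ENNReal.ofReal
            (wt (s - α) i * lamFL α (lIdx i) (nIdx i) ^ 2 * a i ^ 2 * hh (α / 2) i ^ 2)) ∧
        (∑' i : IdxI, ENNReal.ofReal
            (wt (s - α) i * lamFL α (lIdx i) (nIdx i) ^ 2 * a i ^ 2 * hh (α / 2) i ^ 2)) ≤
          ENNReal.ofReal C₁ *
            (∑' i : IdxI, ENNReal.ofReal (wt s i * a i ^ 2 * hh (α / 2) i ^ 2)) := by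
  obtain ⟨c, C, hc, hcC, hbounds⟩ := exists_wt_mul_lamFL_sq_bounds hα.le
  refine ⟨c, C, hc, hcC, fun s a => ?_⟩
  have hq (i : IdxI) : 0 ≤ a i ^ 2 * hh (α / 2) i ^ 2 := by positivity
  constructor
  · refine ENNReal.ofReal_mul_tsum_ofReal_le hc.le fun i => ?_
    simpa only [mul_assoc] using mul_le_mul_of_nonneg_right (hbounds s i).1 (hq i)
  · refine ENNReal.tsum_ofReal_le_ofReal_mul_tsum (hc.le.trans hcC) fun i => ?_
    simpa only [mul_assoc] using mul_le_mul_of_nonneg_right (hbounds s i).2 (hq i)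
end
end

section
/- Let γ ≥ 0, let k ≥ 1 be an integer, let l,n ≥ 0 be integers, and let μ ∈ {1,−1} with (l,μ) ≠ (0,−1). For f(x) = 𝒱_{l,μ}(x) P_n^{(γ,l)}(2r²−1), all k-th order partial derivatives ∂^k f/(∂y^j ∂x^{k−j}), j = 0,…,k, vanish identically on the unit disk Ω if and only if 2n + l < k. -/
open MeasureTheory

noncomputable section

/-!
The function `f` is the polynomial function of `solidHPoly l μ * radialPoly γ l n`, a polynomial
of total degree at most `2n + l`. For a polynomial, all partial derivatives of order `k` vanish iff
its total degree is below `k` (look at a monomial of top degree), and a polynomial vanishing on the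
disk is zero, so it remains to see that the total degree is exactly `2n + l`. Restricting to a line
`t ↦ t • v` on which the solid harmonic does not vanish turns `f` into
`𝒱_{l,μ}(v) t^l P_n^{(γ,l)}(2t² - 1)`, whose coefficient of `t^(2n+l)` is a nonzero multiple of the
leading Jacobi coefficient, a ratio of Gamma values at positive arguments since `γ ≥ 0`.
-/

open MvPolynomial

theorem Finsupp.sum_support_fin_two {M : Type*} [AddCommMonoid M] (d : Fin 2 →₀ M) :
    ∑ i ∈ d.support, d i = d 0 + d 1 := by
  rw [← Finsupp.degree_apply, Finsupp.degree_eq_sum, Fin.sum_univ_two]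

namespace MvPolynomial

variable {R : Type*} [CommRing R]

theorem coeff_iterate_pderiv {σ : Type*} (i : σ) (a : ℕ) (P : MvPolynomial σ R) (m : σ →₀ ℕ) :
    coeff m ((pderiv i)^[a] P) = coeff (m + Finsupp.single i a) P * (m i + a).descFactorial a := by
  induction a generalizing P with
  | zero => simp
  | succ a ih =>
    rw [Function.iterate_succ_apply, ih, coeff_pderiv, add_assoc, ← Finsupp.single_add,
      Finsupp.add_apply, Finsupp.single_eq_same, ← add_assoc (m i), Nat.succ_descFactorial_succ]
    push_cast
    ring

theorem coeff_iterate_pderiv_one_iterate_pderiv_zero (i j : ℕ) (P : MvPolynomial (Fin 2) R)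
    (m : Fin 2 →₀ ℕ) :
    coeff m ((pderiv 1)^[j] ((pderiv 0)^[i] P)) =
      coeff (m + Finsupp.single 0 i + Finsupp.single 1 j) P *
        ((m 0 + i).descFactorial i * (m 1 + j).descFactorial j) := by
  rw [coeff_iterate_pderiv, coeff_iterate_pderiv, add_right_comm m, mul_assoc]
  simp

theorem forall_iterate_pderiv_eq_zero_iff_totalDegree_lt [NoZeroDivisors R] [CharZero R]
    (P : MvPolynomial (Fin 2) R) {k : ℕ} (hk : 0 < k) :
    (∀ j ≤ k, (pderiv 1)^[j] ((pderiv 0)^[k - j] P) = 0) ↔ P.totalDegree < k := by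
  refine ⟨fun h => ?_, fun h j _ => ?_⟩
  · by_contra! hle
    have hP : P ≠ 0 := by rintro rfl; simp at hle; omega
    obtain ⟨m, hm, hmdeg⟩ := Finset.exists_mem_eq_sup P.support (support_nonempty.mpr hP)
      fun s => s.sum fun _ e => e
    replace hmdeg : P.totalDegree = m 0 + m 1 := by
      rw [totalDegree, hmdeg, Finsupp.sum, Finsupp.sum_support_fin_two]
    -- the top-degree monomial `m` survives `∂_y^j ∂_x^(k-j)` for this `j`
    set j := min (m 1) k
    have hm' : m - Finsupp.single 0 (k - j) - Finsupp.single 1 j + Finsupp.single 0 (k - j) +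
        Finsupp.single 1 j = m := by
      ext t; fin_cases t <;> simp <;> omega
    have hcoeff := congrArg (coeff (m - Finsupp.single 0 (k - j) - Finsupp.single 1 j))
      (h j (min_le_right _ _))
    rw [coeff_iterate_pderiv_one_iterate_pderiv_zero, coeff_zero, hm'] at hcoeff
    exact mul_ne_zero (mem_support_iff.mp hm) (by simp) hcoeff
  · ext m
    rw [coeff_iterate_pderiv_one_iterate_pderiv_zero, coeff_zero,
      coeff_eq_zero_of_totalDegree_lt, zero_mul]
    rw [Finsupp.sum_support_fin_two]
    simp
    omega

end MvPolynomial

def polyFun (P : MvPolynomial (Fin 2) ℝ) (p : ℝ × ℝ) : ℝ := eval ![p.1, p.2] P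

theorem hasFDerivAt_polyFun (P : MvPolynomial (Fin 2) ℝ) (p : ℝ × ℝ) :
    HasFDerivAt (polyFun P) (polyFun (pderiv 0 P) p • ContinuousLinearMap.fst ℝ ℝ ℝ +
      polyFun (pderiv 1 P) p • ContinuousLinearMap.snd ℝ ℝ ℝ) p := by
  induction P using MvPolynomial.induction_on with
  | C a =>
    rw [show polyFun (C a) = fun _ => a by ext; simp [polyFun]]
    simpa [polyFun] using hasFDerivAt_const (𝕜 := ℝ) a p
  | add P Q hP hQ =>
    rw [show polyFun (P + Q) = polyFun P + polyFun Q by ext; simp [polyFun]]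
    refine (hP.add hQ).congr_fderiv ?_
    simp only [map_add, polyFun, add_smul]
    abel
  | mul_X P i hP =>
    obtain rfl | rfl : i = 0 ∨ i = 1 := by omega
    · rw [show polyFun (P * X 0) = polyFun P * Prod.fst by ext; simp [polyFun]]
      refine (hP.mul (hasFDerivAt_fst (p := p))).congr_fderiv ?_
      simp [polyFun, pderiv_X, add_smul, smul_add, smul_smul]
      module
    · rw [show polyFun (P * X 1) = polyFun P * Prod.snd by ext; simp [polyFun]]
      refine (hP.mul (hasFDerivAt_snd (p := p))).congr_fderiv ?_
      simp [polyFun, pderiv_X, add_smul, smul_add, smul_smul]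
      module

theorem pdx_polyFun (P : MvPolynomial (Fin 2) ℝ) : pdx (polyFun P) = polyFun (pderiv 0 P) := by
  ext p; simp [pdx, (hasFDerivAt_polyFun P p).fderiv]

theorem pdy_polyFun (P : MvPolynomial (Fin 2) ℝ) : pdy (polyFun P) = polyFun (pderiv 1 P) := by
  ext p; simp [pdy, (hasFDerivAt_polyFun P p).fderiv]

theorem iterate_pdy_iterate_pdx_polyFun (i j : ℕ) (P : MvPolynomial (Fin 2) ℝ) :
    pdy^[j] (pdx^[i] (polyFun P)) = polyFun ((pderiv 1)^[j] ((pderiv 0)^[i] P)) := by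
  have hx : Function.Semiconj polyFun (pderiv 0) pdx := fun P => (pdx_polyFun P).symm
  have hy : Function.Semiconj polyFun (pderiv 1) pdy := fun P => (pdy_polyFun P).symm
  rw [← (hx.iterate_right i).eq, ← (hy.iterate_right j).eq]

theorem eq_zero_of_polyFun_eq_zero_on_unitDisk {P : MvPolynomial (Fin 2) ℝ}
    (h : ∀ p ∈ unitDisk, polyFun P p = 0) : P = 0 := by
  refine funext_set (fun _ => Set.Ioo (-1 / 2) (1 / 2)) (fun _ => Set.Ioo_infinite (by norm_num))
    fun x hx => ?_
  have h0 := hx 0 trivial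
  have h1 := hx 1 trivial
  simp only [Set.mem_Ioo] at h0 h1
  have hmem : (x 0, x 1) ∈ unitDisk := by
    change x 0 ^ 2 + x 1 ^ 2 < 1
    nlinarith
  have hx : ![x 0, x 1] = x := by ext i; fin_cases i <;> rfl
  simpa [polyFun, hx] using h _ hmem

def restrictLine (v : ℝ × ℝ) : MvPolynomial (Fin 2) ℝ →ₐ[ℝ] Polynomial ℝ :=
  aeval ![Polynomial.C v.1 * Polynomial.X, Polynomial.C v.2 * Polynomial.X]

theorem eval_restrictLine (v : ℝ × ℝ) (P : MvPolynomial (Fin 2) ℝ) (t : ℝ) :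
    (restrictLine v P).eval t = polyFun P (t • v) := by
  rw [← Polynomial.coe_aeval_eq_eval, restrictLine, comp_aeval_apply, polyFun, ← aeval_eq_eval]
  congr 1
  ext i
  fin_cases i <;> simp <;> ring

theorem natDegree_restrictLine_le (v : ℝ × ℝ) (P : MvPolynomial (Fin 2) ℝ) :
    (restrictLine v P).natDegree ≤ P.totalDegree := by
  conv_lhs => rw [P.as_sum, map_sum]
  refine Polynomial.natDegree_sum_le_of_forall_le _ _ fun m hm => ?_
  have hm := le_totalDegree hm
  rw [Finsupp.sum, Finsupp.sum_support_fin_two] at hm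
  rw [restrictLine, aeval_monomial, Finsupp.prod_fintype _ _ (by simp), Fin.prod_univ_two,
    Polynomial.algebraMap_eq]
  have hline (c : ℝ) : (Polynomial.C c * Polynomial.X).natDegree ≤ 1 := by compute_degree
  refine le_trans ?_ hm
  compute_degree
  nlinarith [hline v.1, hline v.2]

def harmonicPolys : ℕ → MvPolynomial (Fin 2) ℝ × MvPolynomial (Fin 2) ℝ
  | 0 => (1, 0)
  | l + 1 => ((harmonicPolys l).1 * X 0 - (harmonicPolys l).2 * X 1,
      (harmonicPolys l).2 * X 0 + (harmonicPolys l).1 * X 1)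

theorem polyFun_harmonicPolys (l : ℕ) (p : ℝ × ℝ) :
    polyFun (harmonicPolys l).1 p = (((p.1 : ℂ) + p.2 * Complex.I) ^ l).re ∧
      polyFun (harmonicPolys l).2 p = (((p.1 : ℂ) + p.2 * Complex.I) ^ l).im := by
  induction l with
  | zero => simp [harmonicPolys, polyFun]
  | succ l ih =>
    simp only [polyFun] at ih
    simp [harmonicPolys, polyFun, pow_succ, ih]
    ring

theorem totalDegree_harmonicPolys_le (l : ℕ) :
    (harmonicPolys l).1.totalDegree ≤ l ∧ (harmonicPolys l).2.totalDegree ≤ l := by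
  induction l with
  | zero => simp [harmonicPolys]
  | succ l ih =>
    have hX (i : Fin 2) (Q : MvPolynomial (Fin 2) ℝ) (hQ : Q.totalDegree ≤ l) :
        (Q * X i).totalDegree ≤ l + 1 :=
      (totalDegree_mul _ _).trans (by rw [totalDegree_X]; omega)
    exact ⟨(totalDegree_sub _ _).trans (max_le (hX _ _ ih.1) (hX _ _ ih.2)),
      (totalDegree_add _ _).trans (max_le (hX _ _ ih.2) (hX _ _ ih.1))⟩

def solidHPoly (l : ℕ) (μ : ℤ) : MvPolynomial (Fin 2) ℝ :=
  if l = 0 then (if μ = 1 then C (1 / 2) else 0)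
  else if μ = 1 then (harmonicPolys l).1
  else if μ = -1 then (harmonicPolys l).2 else 0

theorem polyFun_solidHPoly (l : ℕ) (μ : ℤ) : polyFun (solidHPoly l μ) = solidH l μ := by
  ext p
  obtain ⟨hre, him⟩ := polyFun_harmonicPolys l p
  unfold solidHPoly solidH
  split_ifs <;> simp_all [polyFun]

theorem totalDegree_solidHPoly_le (l : ℕ) (μ : ℤ) : (solidHPoly l μ).totalDegree ≤ l := by
  have := totalDegree_harmonicPolys_le l
  unfold solidHPoly
  split_ifs <;> simp_all

theorem solidH_smul (l : ℕ) (μ : ℤ) (t : ℝ) (p : ℝ × ℝ) :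
    solidH l μ (t • p) = t ^ l * solidH l μ p := by
  have h : ((t * p.1 : ℝ) : ℂ) + (t * p.2 : ℝ) * Complex.I =
      t * ((p.1 : ℂ) + p.2 * Complex.I) := by
    push_cast; ring
  unfold solidH
  split_ifs <;> simp_all [mul_pow, ← Complex.ofReal_pow]

theorem exists_solidH_ne_zero {l : ℕ} {μ : ℤ} (hμ : μ = 1 ∨ μ = -1) (hlμ : ¬(l = 0 ∧ μ = -1)) :
    ∃ v : ℝ × ℝ, v.1 ^ 2 + v.2 ^ 2 = 1 ∧ solidH l μ v ≠ 0 := by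
  rcases hμ with rfl | rfl
  · refine ⟨(1, 0), by norm_num, ?_⟩
    unfold solidH
    split_ifs <;> simp_all
  · have hl : l ≠ 0 := fun h => hlμ ⟨h, rfl⟩
    set θ := Real.pi / (2 * l)
    refine ⟨(Real.cos θ, Real.sin θ), by simp, ?_⟩
    have hlθ : (l : ℂ) * θ = (Real.pi / 2 : ℝ) := by
      push_cast [θ]; field_simp
    unfold solidH
    simp only [Nat.cast_eq_zero, hl, if_false, Nat.cast_pos, Nat.pos_of_ne_zero hl, if_true,
      Int.toNat_natCast]
    push_cast
    rw [Complex.cos_add_sin_mul_I_pow, hlθ, ← Complex.ofReal_cos, ← Complex.ofReal_sin]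
    simp

theorem restrictLine_solidHPoly (v : ℝ × ℝ) (l : ℕ) (μ : ℤ) :
    restrictLine v (solidHPoly l μ) = Polynomial.C (solidH l μ v) * Polynomial.X ^ l := by
  refine Polynomial.funext fun t => ?_
  rw [eval_restrictLine, polyFun_solidHPoly, solidH_smul, Polynomial.eval_mul, Polynomial.eval_C,
    Polynomial.eval_pow, Polynomial.eval_X, mul_comm]

def jacobiCoeff (a b : ℝ) (n j : ℕ) : ℝ :=
  (-1) ^ n * (Real.Gamma (n + 1 + b) / (n.factorial * Real.Gamma (n + 1 + a + b))) *
    ((-1) ^ j * (2 : ℝ) ^ (-(j : ℤ)) * n.choose j *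
      (Real.Gamma (n + j + 1 + a + b) / Real.Gamma (j + 1 + b)))

theorem jacobiP_eq_sum (a b : ℝ) (n : ℕ) (t : ℝ) :
    jacobiP a b n t = ∑ j ∈ Finset.range (n + 1), jacobiCoeff a b n j * (1 + t) ^ j := by
  simp only [jacobiP, Nat.cast_nonneg, if_true, Int.toNat_natCast, Finset.mul_sum, jacobiCoeff]
  exact Finset.sum_congr rfl fun j _ => by ring

theorem jacobiCoeff_self_ne_zero {a b : ℝ} (hb : -1 < b) (hab : -1 < a + b) (n : ℕ) :
    jacobiCoeff a b n n ≠ 0 := by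
  have hΓ {x : ℝ} (hx : 0 < x) : Real.Gamma x ≠ 0 := (Real.Gamma_pos_of_pos hx).ne'
  have hn : (0 : ℝ) ≤ n := n.cast_nonneg
  unfold jacobiCoeff
  rw [Nat.choose_self]
  refine mul_ne_zero (mul_ne_zero (by simp) (div_ne_zero (hΓ (by linarith))
    (mul_ne_zero (by positivity) (hΓ (by linarith))))) ?_
  exact mul_ne_zero (by simp) (div_ne_zero (hΓ (by linarith)) (hΓ (by linarith)))

def radialPoly (a b : ℝ) (n : ℕ) : MvPolynomial (Fin 2) ℝ :=
  ∑ j ∈ Finset.range (n + 1), C (jacobiCoeff a b n j * 2 ^ j) * (X 0 ^ 2 + X 1 ^ 2) ^ j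

theorem polyFun_radialPoly (a b : ℝ) (n : ℕ) (p : ℝ × ℝ) :
    polyFun (radialPoly a b n) p = jacobiP a b n (2 * (p.1 ^ 2 + p.2 ^ 2) - 1) := by
  simp only [polyFun, radialPoly, jacobiP_eq_sum, map_sum, map_mul, map_pow, map_add, eval_C,
    eval_X]
  refine Finset.sum_congr rfl fun j _ => ?_
  simp only [Matrix.cons_val_zero, Matrix.cons_val_one]
  rw [show (1 : ℝ) + (2 * (p.1 ^ 2 + p.2 ^ 2) - 1) = 2 * (p.1 ^ 2 + p.2 ^ 2) by ring, mul_pow]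
  ring

theorem totalDegree_radialPoly_le (a b : ℝ) (n : ℕ) :
    (radialPoly a b n).totalDegree ≤ 2 * n := by
  refine (totalDegree_finsetSum _ _).trans (Finset.sup_le fun j hj => ?_)
  have hj : j ≤ n := Nat.lt_succ_iff.mp (Finset.mem_range.mp hj)
  have hsq : (X 0 ^ 2 + X 1 ^ 2 : MvPolynomial (Fin 2) ℝ).totalDegree ≤ 2 :=
    (totalDegree_add _ _).trans (max_le (totalDegree_X_pow _ _).le (totalDegree_X_pow _ _).le)
  have := (totalDegree_pow (X 0 ^ 2 + X 1 ^ 2 : MvPolynomial (Fin 2) ℝ) j).trans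
    (Nat.mul_le_mul_left j hsq)
  exact (totalDegree_mul _ _).trans (by rw [totalDegree_C]; omega)

theorem restrictLine_radialPoly {v : ℝ × ℝ} (hv : v.1 ^ 2 + v.2 ^ 2 = 1) (a b : ℝ) (n : ℕ) :
    restrictLine v (radialPoly a b n) = ∑ j ∈ Finset.range (n + 1),
      Polynomial.C (jacobiCoeff a b n j * 2 ^ j) * Polynomial.X ^ (2 * j) := by
  have hsq : restrictLine v (X 0 ^ 2 + X 1 ^ 2) = Polynomial.X ^ 2 := by
    simp only [restrictLine, map_add, map_pow, aeval_X, Matrix.cons_val_zero, Matrix.cons_val_one]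
    rw [mul_pow, mul_pow, ← add_mul, ← Polynomial.C_pow, ← Polynomial.C_pow, ← Polynomial.C_add,
      hv, Polynomial.C_1, one_mul]
  rw [radialPoly, map_sum]
  refine Finset.sum_congr rfl fun j _ => ?_
  rw [map_mul, map_pow, hsq, ← pow_mul, restrictLine, aeval_C, Polynomial.algebraMap_eq]

theorem totalDegree_solidHPoly_mul_radialPoly {l : ℕ} {μ : ℤ} (hμ : μ = 1 ∨ μ = -1)
    (hlμ : ¬(l = 0 ∧ μ = -1)) {a : ℝ} (ha : -1 < a + l) (n : ℕ) :
    (solidHPoly l μ * radialPoly a l n).totalDegree = 2 * n + l := by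
  refine le_antisymm ?_ ?_
  · have := totalDegree_solidHPoly_le l μ
    have := totalDegree_radialPoly_le a l n
    exact (totalDegree_mul _ _).trans (by omega)
  · obtain ⟨v, hv, hsv⟩ := exists_solidH_ne_zero hμ hlμ
    refine le_trans (Polynomial.le_natDegree_of_ne_zero ?_) (natDegree_restrictLine_le v _)
    rw [map_mul, restrictLine_solidHPoly, restrictLine_radialPoly hv, mul_assoc,
      Polynomial.coeff_C_mul, Polynomial.coeff_X_pow_mul, Polynomial.finsetSum_coeff,
      Finset.sum_eq_single_of_mem n (Finset.self_mem_range_succ n) fun j _ hj => by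
        rw [Polynomial.coeff_C_mul_X_pow, if_neg (by omega)],
      Polynomial.coeff_C_mul_X_pow, if_pos rfl]
    have hl : (-1 : ℝ) < l := neg_one_lt_zero.trans_le l.cast_nonneg
    exact mul_ne_zero hsv (mul_ne_zero (jacobiCoeff_self_ne_zero hl ha n) (by positivity))

/-- all `k`-th order partial derivatives of
`f = 𝒱_{l,μ} P_n^{(γ,l)}(2r²-1)` vanish identically on the unit disk iff `2n + l < k`. -/
theorem stmt15 (γ : ℝ) (hγ : 0 ≤ γ) (k : ℕ) (hk : 1 ≤ k) (l n : ℕ) (μ : ℤ)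
    (hμ : μ = 1 ∨ μ = -1) (hlμ : ¬(l = 0 ∧ μ = -1)) :
    (∀ j : ℕ, j ≤ k → ∀ p ∈ unitDisk,
        (pdy^[j] (pdx^[k - j] fun q => solidH (l : ℤ) μ q *
          jacobiP γ (l : ℝ) (n : ℤ) (2 * (q.1 ^ 2 + q.2 ^ 2) - 1))) p = 0) ↔
      2 * n + l < k := by
  have hf : (fun q => solidH l μ q * jacobiP γ l n (2 * (q.1 ^ 2 + q.2 ^ 2) - 1)) =
      polyFun (solidHPoly l μ * radialPoly γ l n) := by
    ext q
    simp only [← polyFun_solidHPoly, ← polyFun_radialPoly, polyFun, map_mul]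
  have hγl : -1 < γ + l := by linarith [(l.cast_nonneg : (0 : ℝ) ≤ l)]
  simp only [hf, iterate_pdy_iterate_pdx_polyFun]
  rw [← totalDegree_solidHPoly_mul_radialPoly hμ hlμ hγl,
    ← forall_iterate_pderiv_eq_zero_iff_totalDegree_lt _ hk]
  exact forall₂_congr fun j _ =>
    ⟨eq_zero_of_polyFun_eq_zero_on_unitDisk, fun h p _ => by simp [h, polyFun]⟩
end
end
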